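/- arXiv:0812.1528 — 2 statements merged into one kernel-verified Lean document; each statement's English description precedes it below -/
import Mathlib

section
/- Let Γ be a graph of order n with maximum degree Δ. Every dominating set S in the complement graph Γ̄ with |S| ≥ ⌈(n+k+Δ-1)/2⌉ is a global offensive k-alliance in Γ̄. -/
open Finset

variable {V V₁ V₂ : Type*}

/-- Number of neighbors of `v` lying in `S`. -/
def degOn [Fintype V] [DecidableEq V] (G : SimpleGraph V) [DecidableRel G.Adj]
    (S : Finset V) (v : V) : ℕ :=
  (G.neighborFinset v ∩ S).card

/-- `S` is a dominating set of `G`. -/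
def IsDominating [Fintype V] (G : SimpleGraph V) (S : Finset V) : Prop :=
  ∀ v ∉ S, ∃ u ∈ S, G.Adj u v

/-- `S` is a global offensive `k`-alliance in `G`. -/
def IsGOA [Fintype V] [DecidableEq V] (G : SimpleGraph V) [DecidableRel G.Adj]
    (k : ℤ) (S : Finset V) : Prop :=
  IsDominating G S ∧ ∀ v ∉ S, (degOn G Sᶜ v : ℤ) + k ≤ (degOn G S v : ℤ)

/-- `S` is an offensive `k`-alliance in `G`: it is nonempty and every boundary
vertex has at least `k` more neighbors inside `S` than outside. -/
def IsOA [Fintype V] [DecidableEq V] (G : SimpleGraph V) [DecidableRel G.Adj]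
    (k : ℤ) (S : Finset V) : Prop :=
  S.Nonempty ∧ ∀ v ∉ S, (∃ u ∈ S, G.Adj u v) →
    (degOn G Sᶜ v : ℤ) + k ≤ (degOn G S v : ℤ)

/-- `S` is an `r`-dependent set in `G`. -/
def IsDependent [Fintype V] [DecidableEq V] (G : SimpleGraph V) [DecidableRel G.Adj]
    (r : ℕ) (S : Finset V) : Prop :=
  ∀ v ∈ S, degOn G S v ≤ r

/-- `S` is a `τ`-dominating set in `G`. -/
def IsTauDominating [Fintype V] [DecidableEq V] (G : SimpleGraph V) [DecidableRel G.Adj]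
    (τ : ℝ) (S : Finset V) : Prop :=
  ∀ v ∉ S, τ * (G.degree v : ℝ) ≤ (degOn G S v : ℝ)

/-- The global offensive `k`-alliance number of `G`. -/
noncomputable def goaNum [Fintype V] [DecidableEq V] (G : SimpleGraph V)
    [DecidableRel G.Adj] (k : ℤ) : ℕ :=
  sInf {t | ∃ S : Finset V, IsGOA G k S ∧ S.card = t}

/-- The maximum cardinality of an `r`-dependent set in `G`. -/
noncomputable def depNum [Fintype V] [DecidableEq V] (G : SimpleGraph V)
    [DecidableRel G.Adj] (r : ℕ) : ℕ :=
  sSup {t | ∃ S : Finset V, IsDependent G r S ∧ S.card = t}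

/-! Outside `S`, every vertex `v` has at most `n - |S| - 1` neighbours in `Sᶜ`, while in `Γ̄` it is
adjacent to all of `S` except its at most `Δ` neighbours in `Γ`. So the surplus of `S`-neighbours
over `Sᶜ`-neighbours is at least `2|S| - n - Δ + 1 ≥ k`. -/

section degOn

variable [Fintype V] [DecidableEq V]

theorem degOn_compl_add_card_lt (G : SimpleGraph V) [DecidableRel G.Adj] {S : Finset V} {v : V}
    (hv : v ∉ S) : degOn G Sᶜ v + S.card < Fintype.card V := by
  have hsub : G.neighborFinset v ∩ Sᶜ ⊆ Sᶜ.erase v := fun u hu => by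
    rw [mem_inter, SimpleGraph.mem_neighborFinset] at hu
    exact mem_erase.mpr ⟨hu.1.ne', hu.2⟩
  have hcard : (Sᶜ.erase v).card + 1 + S.card = Fintype.card V := by
    rw [card_erase_add_one (by simpa using hv), card_compl, Nat.sub_add_cancel (card_le_univ S)]
  have := card_le_card hsub
  unfold degOn
  omega

theorem degOn_add_degOn_compl (G : SimpleGraph V) [DecidableRel G.Adj] [DecidableRel Gᶜ.Adj]
    {S : Finset V} {v : V} (hv : v ∉ S) : degOn G S v + degOn Gᶜ S v = S.card := by
  have hfilter (H : SimpleGraph V) [DecidableRel H.Adj] : degOn H S v = (S.filter (H.Adj v)).card := by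
    rw [degOn, inter_comm, ← filter_mem_eq_inter]
    simp only [SimpleGraph.mem_neighborFinset]
  have hcompl : S.filter (Gᶜ.Adj v) = S.filter (¬ G.Adj v ·) :=
    filter_congr fun u hu => by
      rw [SimpleGraph.compl_adj]
      exact and_iff_right (ne_of_mem_of_not_mem hu hv).symm
  rw [hfilter, hfilter, hcompl, card_filter_add_card_filter_not]

theorem degOn_le_maxDegree (G : SimpleGraph V) [DecidableRel G.Adj] (S : Finset V) (v : V) :
    degOn G S v ≤ G.maxDegree :=
  calc degOn G S v ≤ (G.neighborFinset v).card := card_le_card inter_subset_left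
    _ = G.degree v := G.card_neighborFinset_eq_degree v
    _ ≤ G.maxDegree := G.degree_le_maxDegree v

end degOn

theorem le_two_mul_of_ceil_half_le {m s : ℤ} (h : ⌈(m : ℚ) / 2⌉ ≤ s) : m ≤ 2 * s := by
  have : (m : ℚ) / 2 ≤ s := Int.ceil_le.mp h
  exact_mod_cast (div_le_iff₀ two_pos).mp this |>.trans_eq (mul_comm _ _)

theorem stmt_12 [Fintype V] [DecidableEq V] (G : SimpleGraph V) [DecidableRel G.Adj]
    [DecidableRel Gᶜ.Adj] (k : ℤ) (S : Finset V) (hdom : IsDominating Gᶜ S)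
    (hcard : (⌈(((Fintype.card V : ℤ) + k + (G.maxDegree : ℤ) - 1 : ℤ) : ℚ) / 2⌉ : ℤ)
      ≤ (S.card : ℤ)) :
    IsGOA Gᶜ k S := by
  refine ⟨hdom, fun v hv => ?_⟩
  have houtside := degOn_compl_add_card_lt Gᶜ hv
  have hinside := degOn_add_degOn_compl G hv
  have hΔ := degOn_le_maxDegree G S v
  have hsize := le_two_mul_of_ceil_half_le hcard
  omega
end

section
/- Let Γ be a graph of order n with maximum degree Δ. If S is a global offensive k-alliance in Γ such that the subgraph induced by V \ S has minimum degree p, then |S| ≥ ⌈(p+k)·n / (Δ+p+k)⌉. -/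
open Finset

variable {V V₁ V₂ : Type*}

lemma degOn_eq_sum [Fintype V] [DecidableEq V] (G : SimpleGraph V) [DecidableRel G.Adj]
    (C : Finset V) (v : V) :
    degOn G C v = ∑ u ∈ C, if G.Adj v u then 1 else 0 := by
  rw [degOn]
  rw [show G.neighborFinset v ∩ C = C.filter (fun u => G.Adj v u) by
    ext u; simp [and_comm]]
  exact Finset.card_filter _ _

lemma sum_degOn_comm [Fintype V] [DecidableEq V] (G : SimpleGraph V) [DecidableRel G.Adj]
    (A B : Finset V) :
    ∑ v ∈ A, degOn G B v = ∑ u ∈ B, degOn G A u := by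
  simp only [degOn_eq_sum]
  rw [Finset.sum_comm]
  simp [G.adj_comm]

theorem stmt_19 [Fintype V] [DecidableEq V] (G : SimpleGraph V) [DecidableRel G.Adj]
    (k : ℤ) (S : Finset V) (hS : IsGOA G k S) (p : ℕ)
    (hp : ∀ v ∈ Sᶜ, p ≤ degOn G Sᶜ v)
    (hpos : 0 < (G.maxDegree : ℤ) + p + k) :
    (⌈(((p : ℤ) + k) * (Fintype.card V : ℤ) : ℚ) / (((G.maxDegree : ℤ) + p + k : ℤ) : ℚ)⌉ : ℤ)
      ≤ (S.card : ℤ) := by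
  have key : ((p : ℤ) + k) * (Fintype.card V : ℤ) ≤ ((G.maxDegree : ℤ) + p + k) * S.card := by
    have h1 : ∀ v ∈ Sᶜ, (p : ℤ) + k ≤ (degOn G S v : ℤ) := by
      intro v hv
      have hv' : v ∉ S := Finset.mem_compl.mp hv
      calc (p : ℤ) + k ≤ (degOn G Sᶜ v : ℤ) + k := by
            have := hp v hv; omega
        _ ≤ (degOn G S v : ℤ) := hS.2 v hv'
    have h2 : ((p : ℤ) + k) * Sᶜ.card ≤ ∑ v ∈ Sᶜ, (degOn G S v : ℤ) := by
      calc ((p : ℤ) + k) * Sᶜ.card = ∑ _v ∈ Sᶜ, ((p : ℤ) + k) := by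
            rw [Finset.sum_const, nsmul_eq_mul, mul_comm]
        _ ≤ _ := Finset.sum_le_sum h1
    have h3 : (∑ v ∈ Sᶜ, degOn G S v : ℤ) ≤ (G.maxDegree : ℤ) * S.card := by
      have hn : ∑ v ∈ Sᶜ, degOn G S v ≤ G.maxDegree * S.card := by
        rw [sum_degOn_comm G Sᶜ S]
        calc ∑ u ∈ S, degOn G Sᶜ u ≤ ∑ _u ∈ S, G.maxDegree := by
              apply Finset.sum_le_sum
              intro u _
              calc degOn G Sᶜ u ≤ (G.neighborFinset u).card := Finset.card_le_card
                    (Finset.inter_subset_left)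
                _ = G.degree u := G.card_neighborFinset_eq_degree u
                _ ≤ G.maxDegree := G.degree_le_maxDegree u
          _ = G.maxDegree * S.card := by rw [Finset.sum_const, smul_eq_mul, mul_comm]
      exact_mod_cast hn
    have hc : (Sᶜ.card : ℤ) = (Fintype.card V : ℤ) - S.card := by
      rw [Finset.card_compl]
      have := Finset.card_le_univ S
      push_cast [this]
      omega
    push_cast at h2
    rw [hc] at h2
    nlinarith [h2, h3]
  rw [Int.ceil_le, div_le_iff₀ (by exact_mod_cast hpos)]
  have hq : (((p : ℤ) + k) * (Fintype.card V : ℤ) : ℚ) ≤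
      (((G.maxDegree : ℤ) + p + k) * S.card : ℚ) := by exact_mod_cast key
  push_cast at hq ⊢
  ring_nf at hq ⊢
  linarith
end
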